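/- Let a₁,a₂,b,c₁,c₂ ∈ ℝ and on the region {(x₁,x₂,x₃) ∈ ℝ³ : x₃ > 0} define the 1-form ω = ω₁dx₁ + ω₂dx₂ + ω₃dx₃ with ω₁ = (1/x₃²)((a₁/2)(x₁²−x₂²) + a₂x₁x₂ + bx₁ + c₁) − a₁/2, ω₂ = (1/x₃²)((a₂/2)(x₂²−x₁²) + a₁x₁x₂ + bx₂ + c₂) − a₂/2, ω₃ = (a₁x₁ + a₂x₂ + b)/x₃. Then ω ∧ dω = (2(c₁a₂ − c₂a₁)/x₃³) dx₁ ∧ dx₂ ∧ dx₃. -/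

import Mathlib

/-- Components of the dual 1-form `ω` on `{x₃ > 0} ⊂ ℝ³`. -/
noncomputable def ww1 (a₁ a₂ b c₁ x₁ x₂ x₃ : ℝ) : ℝ :=
  (1 / x₃ ^ 2) * (a₁ / 2 * (x₁ ^ 2 - x₂ ^ 2) + a₂ * x₁ * x₂ + b * x₁ + c₁) - a₁ / 2
noncomputable def ww2 (a₁ a₂ b c₂ x₁ x₂ x₃ : ℝ) : ℝ :=
  (1 / x₃ ^ 2) * (a₂ / 2 * (x₂ ^ 2 - x₁ ^ 2) + a₁ * x₁ * x₂ + b * x₂ + c₂) - a₂ / 2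
noncomputable def ww3 (a₁ a₂ b x₁ x₂ x₃ : ℝ) : ℝ := (a₁ * x₁ + a₂ * x₂ + b) / x₃

lemma hasDerivAt_one_div_sq_mul_sub (K a : ℝ) {t : ℝ} (ht : t ≠ 0) :
    HasDerivAt (fun s : ℝ => 1 / s ^ 2 * K - a) (-2 * K / t ^ 3) t :=
  ((((hasDerivAt_const t 1).div (hasDerivAt_pow 2 t) (pow_ne_zero 2 ht)).mul_const K).sub_const a)
    |>.congr_deriv (by field_simp; ring)

section Partials

variable (a₁ a₂ b c₁ c₂ x₁ x₂ x₃ : ℝ)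

lemma hasDerivAt_ww3_x₁ : HasDerivAt (fun s => ww3 a₁ a₂ b s x₂ x₃) (a₁ / x₃) x₁ :=
  ((((hasDerivAt_id x₁).const_mul a₁).add_const (a₂ * x₂)).add_const b).div_const x₃
    |>.congr_deriv (by ring)

lemma hasDerivAt_ww3_x₂ : HasDerivAt (fun s => ww3 a₁ a₂ b x₁ s x₃) (a₂ / x₃) x₂ :=
  ((((hasDerivAt_id x₂).const_mul a₂).const_add (a₁ * x₁)).add_const b).div_const x₃
    |>.congr_deriv (by ring)

lemma hasDerivAt_ww1_x₂ :
    HasDerivAt (fun s => ww1 a₁ a₂ b c₁ x₁ s x₃) ((a₂ * x₁ - a₁ * x₂) / x₃ ^ 2) x₂ :=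
  (((((((hasDerivAt_pow 2 x₂).const_sub (x₁ ^ 2)).const_mul (a₁ / 2)).add
    ((hasDerivAt_id x₂).const_mul (a₂ * x₁))).add_const (b * x₁)).add_const c₁).const_mul
      (1 / x₃ ^ 2)).sub_const (a₁ / 2) |>.congr_deriv (by ring)

lemma hasDerivAt_ww2_x₁ :
    HasDerivAt (fun s => ww2 a₁ a₂ b c₂ s x₂ x₃) ((a₁ * x₂ - a₂ * x₁) / x₃ ^ 2) x₁ :=
  (((((((hasDerivAt_pow 2 x₁).const_sub (x₂ ^ 2)).const_mul (a₂ / 2)).add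
    (((hasDerivAt_id x₁).const_mul a₁).mul_const x₂)).add_const (b * x₂)).add_const c₂).const_mul
      (1 / x₃ ^ 2)).sub_const (a₂ / 2) |>.congr_deriv (by ring)

variable {x₃}

lemma hasDerivAt_ww1_x₃ (hx₃ : x₃ ≠ 0) :
    HasDerivAt (fun s => ww1 a₁ a₂ b c₁ x₁ x₂ s)
      (-2 * (a₁ / 2 * (x₁ ^ 2 - x₂ ^ 2) + a₂ * x₁ * x₂ + b * x₁ + c₁) / x₃ ^ 3) x₃ :=
  hasDerivAt_one_div_sq_mul_sub _ _ hx₃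

lemma hasDerivAt_ww2_x₃ (hx₃ : x₃ ≠ 0) :
    HasDerivAt (fun s => ww2 a₁ a₂ b c₂ x₁ x₂ s)
      (-2 * (a₂ / 2 * (x₂ ^ 2 - x₁ ^ 2) + a₁ * x₁ * x₂ + b * x₂ + c₂) / x₃ ^ 3) x₃ :=
  hasDerivAt_one_div_sq_mul_sub _ _ hx₃

end Partials

/-- The coefficient of `dx₁∧dx₂∧dx₃` in `ω ∧ dω` is `ω₁(∂₂ω₃−∂₃ω₂) − ω₂(∂₁ω₃−∂₃ω₁) + ω₃(∂₁ω₂−∂₂ω₁)`. -/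
theorem stmt8 (a₁ a₂ b c₁ c₂ : ℝ) (x₁ x₂ x₃ : ℝ) (h : 0 < x₃) :
    ww1 a₁ a₂ b c₁ x₁ x₂ x₃ *
        (deriv (fun s => ww3 a₁ a₂ b x₁ s x₃) x₂ -
          deriv (fun s => ww2 a₁ a₂ b c₂ x₁ x₂ s) x₃) -
      ww2 a₁ a₂ b c₂ x₁ x₂ x₃ *
        (deriv (fun s => ww3 a₁ a₂ b s x₂ x₃) x₁ -
          deriv (fun s => ww1 a₁ a₂ b c₁ x₁ x₂ s) x₃) +
      ww3 a₁ a₂ b x₁ x₂ x₃ *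
        (deriv (fun s => ww2 a₁ a₂ b c₂ s x₂ x₃) x₁ -
          deriv (fun s => ww1 a₁ a₂ b c₁ x₁ s x₃) x₂) =
      2 * (c₁ * a₂ - c₂ * a₁) / x₃ ^ 3 := by
  have hx₃ : x₃ ≠ 0 := h.ne'
  rw [(hasDerivAt_ww3_x₂ ..).deriv, (hasDerivAt_ww2_x₃ a₁ a₂ b c₂ x₁ x₂ hx₃).deriv,
    (hasDerivAt_ww3_x₁ ..).deriv, (hasDerivAt_ww1_x₃ a₁ a₂ b c₁ x₁ x₂ hx₃).deriv,
    (hasDerivAt_ww2_x₁ ..).deriv, (hasDerivAt_ww1_x₂ ..).deriv]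
  simp only [ww1, ww2, ww3]
  field_simp
  ring
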